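/- Let E be a Banach space and B : E × E → E a continuous bilinear map for which there exists η > 0 with ‖B(x,y)‖ ≤ η‖x‖‖y‖ for all x, y ∈ E. Then for every y ∈ E with ‖y‖ ≤ 1/(4η), the equation x = y − B(x,x) has a unique solution x̄ ∈ E satisfying ‖x̄‖ ≤ 1/(2η). -/

import Mathlib

/-!
Write `r = 1/(2η)`. On the ball of radius `r` the map `x ↦ y - B(x,x)` is only `1`-Lipschitz, so
we approximate: for `0 < s ≤ 1`, the map `x ↦ (1 - s²) y - B(x,x)` sends the ball of radius
`(1 - s) r` into itself and is `(1 - s)`-Lipschitz there, so it has a fixed point `x_s`.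
Comparing two solutions `u, v` of the equations with parameters `s, t`, the linear part of the
error gains the factor `(s + t)/2` while the right-hand sides differ by `(s² - t²) y`; hence
`‖u - v‖ ≤ 2|s - t|‖y‖`.
Thus `x_s` is Cauchy as `s → 0`, its limit solves the critical equation, and every solution with
`s = 0` is within `2 s ‖y‖` of `x_s`, which gives uniqueness.
-/

open Metric Set Filter Topology

section QuadraticEquation

variable {E : Type*} [NormedAddCommGroup E] [NormedSpace ℝ E]
  {B : E →L[ℝ] E →L[ℝ] E} {η : ℝ}

theorem norm_apply_self_sub_apply_self_le (hB : ∀ x y : E, ‖B x y‖ ≤ η * ‖x‖ * ‖y‖) (u v : E) :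
    ‖B u u - B v v‖ ≤ η * (‖u‖ + ‖v‖) * ‖u - v‖ := by
  have hsplit : B u u - B v v = B u (u - v) + B (u - v) v := by
    simp only [map_sub, sub_apply]
    abel
  calc ‖B u u - B v v‖ ≤ η * ‖u‖ * ‖u - v‖ + η * ‖u - v‖ * ‖v‖ := by
        rw [hsplit]
        exact (norm_add_le _ _).trans (add_le_add (hB _ _) (hB _ _))
    _ = η * (‖u‖ + ‖v‖) * ‖u - v‖ := by ring

theorem norm_sub_le_of_eq_sub_apply_self (hB : ∀ x y : E, ‖B x y‖ ≤ η * ‖x‖ * ‖y‖)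
    {u v a b : E} (hu : u = a - B u u) (hv : v = b - B v v) :
    ‖u - v‖ ≤ ‖a - b‖ + η * (‖u‖ + ‖v‖) * ‖u - v‖ := by
  have hdiff : u - v = (a - b) - (B u u - B v v) := by
    conv_lhs => rw [hu, hv]
    abel
  calc ‖u - v‖ ≤ ‖a - b‖ + ‖B u u - B v v‖ := by rw [hdiff]; exact norm_sub_le _ _
    _ ≤ ‖a - b‖ + η * (‖u‖ + ‖v‖) * ‖u - v‖ := by
        gcongr; exact norm_apply_self_sub_apply_self_le hB u v

theorem exists_eq_sub_apply_self_of_norm_le [CompleteSpace E]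
    (hB : ∀ x y : E, ‖B x y‖ ≤ η * ‖x‖ * ‖y‖) (hη : 0 < η) {s : ℝ} (hs₀ : 0 < s) (hs₁ : s ≤ 1)
    {a : E} (ha : ‖a‖ ≤ (1 - s ^ 2) / (4 * η)) :
    ∃ x : E, x = a - B x x ∧ ‖x‖ ≤ (1 - s) / (2 * η) := by
  set r := (1 - s) / (2 * η) with hr
  have hr₀ : 0 ≤ r := div_nonneg (by linarith) (by linarith)
  have hηr : η * r = (1 - s) / 2 := by rw [hr]; field_simp
  set Φ : E → E := fun x => a - B x x
  have hmaps : MapsTo Φ (closedBall 0 r) (closedBall 0 r) := by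
    intro x hx
    rw [mem_closedBall_zero_iff] at hx ⊢
    calc ‖a - B x x‖ ≤ ‖a‖ + η * ‖x‖ * ‖x‖ := (norm_sub_le _ _).trans (by gcongr; exact hB x x)
      _ ≤ (1 - s ^ 2) / (4 * η) + η * r * r := by gcongr
      _ = r := by rw [hr]; field_simp; ring
  have hlip : LipschitzOnWith (Real.toNNReal (1 - s)) Φ (closedBall 0 r) := by
    refine LipschitzOnWith.of_dist_le_mul fun u hu v hv => ?_
    rw [mem_closedBall_zero_iff] at hu hv
    rw [dist_eq_norm, dist_eq_norm, Real.coe_toNNReal _ (by linarith),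
      show Φ u - Φ v = -(B u u - B v v) by simp only [Φ]; abel, norm_neg]
    calc ‖B u u - B v v‖ ≤ η * (‖u‖ + ‖v‖) * ‖u - v‖ := norm_apply_self_sub_apply_self_le hB u v
      _ ≤ η * (r + r) * ‖u - v‖ := by gcongr
      _ = (1 - s) * ‖u - v‖ := by linear_combination 2 * ‖u - v‖ * hηr
  have hcontr : ContractingWith (Real.toNNReal (1 - s)) (hmaps.restrict Φ _ _) :=
    ⟨by rw [Real.toNNReal_lt_one]; linarith, hlip.mapsToRestrict hmaps⟩
  obtain ⟨x, hx, hfix, -⟩ := hcontr.exists_fixedPoint' isClosed_closedBall.isComplete hmaps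
    (mem_closedBall_self hr₀) (edist_ne_top _ _)
  exact ⟨x, hfix.symm, mem_closedBall_zero_iff.1 hx⟩

theorem norm_sub_le_of_eq_smul_sub_apply_self (hB : ∀ x y : E, ‖B x y‖ ≤ η * ‖x‖ * ‖y‖)
    (hη : 0 < η) {s t : ℝ} (hs : 0 ≤ s) (ht : 0 < t) {y u v : E}
    (hu : u = (1 - s ^ 2) • y - B u u) (hu_le : ‖u‖ ≤ (1 - s) / (2 * η))
    (hv : v = (1 - t ^ 2) • y - B v v) (hv_le : ‖v‖ ≤ (1 - t) / (2 * η)) :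
    ‖u - v‖ ≤ 2 * |s - t| * ‖y‖ := by
  have hrhs : ‖(1 - s ^ 2) • y - (1 - t ^ 2) • y‖ = |s - t| * (s + t) * ‖y‖ := by
    rw [← sub_smul, norm_smul, Real.norm_eq_abs,
      show 1 - s ^ 2 - (1 - t ^ 2) = (t - s) * (s + t) by ring, abs_mul, abs_sub_comm,
      abs_of_pos (by linarith : 0 < s + t)]
  have hgain : η * (‖u‖ + ‖v‖) ≤ 1 - (s + t) / 2 := by
    have hηu : η * ‖u‖ ≤ (1 - s) / 2 :=
      (mul_le_mul_of_nonneg_left hu_le hη.le).trans_eq (by field_simp)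
    have hηv : η * ‖v‖ ≤ (1 - t) / 2 :=
      (mul_le_mul_of_nonneg_left hv_le hη.le).trans_eq (by field_simp)
    linarith
  have hest := norm_sub_le_of_eq_sub_apply_self hB hu hv
  rw [hrhs] at hest
  have hhalf : 0 < (s + t) / 2 := by linarith
  refine le_of_mul_le_mul_left ?_ hhalf
  linarith [mul_le_mul_of_nonneg_right hgain (norm_nonneg (u - v))]

theorem exists_eq_smul_sub_apply_self [CompleteSpace E]
    (hB : ∀ x y : E, ‖B x y‖ ≤ η * ‖x‖ * ‖y‖) (hη : 0 < η) {y : E} (hy : ‖y‖ ≤ 1 / (4 * η))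
    {s : ℝ} (hs₀ : 0 < s) (hs₁ : s ≤ 1) :
    ∃ x : E, x = (1 - s ^ 2) • y - B x x ∧ ‖x‖ ≤ (1 - s) / (2 * η) := by
  have hcoeff : 0 ≤ 1 - s ^ 2 := by nlinarith
  refine exists_eq_sub_apply_self_of_norm_le hB hη hs₀ hs₁ ?_
  rw [norm_smul, Real.norm_of_nonneg hcoeff]
  exact (mul_le_mul_of_nonneg_left hy hcoeff).trans_eq (by ring)

theorem tendsto_of_eq_smul_sub_apply_self (hB : ∀ x y : E, ‖B x y‖ ≤ η * ‖x‖ * ‖y‖)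
    (hη : 0 < η) {ι : Type*} {l : Filter ι} {s : ι → ℝ} (hs : Tendsto s l (𝓝 0))
    (hs₀ : ∀ i, 0 < s i) {y z : E} {x : ι → E}
    (hx : ∀ i, x i = (1 - s i ^ 2) • y - B (x i) (x i)) (hx_le : ∀ i, ‖x i‖ ≤ (1 - s i) / (2 * η))
    (hz : z = y - B z z) (hz_le : ‖z‖ ≤ 1 / (2 * η)) :
    Tendsto x l (𝓝 z) := by
  rw [tendsto_iff_norm_sub_tendsto_zero]
  refine squeeze_zero (fun _ => norm_nonneg _) (fun i => ?_)
    (by simpa using hs.const_mul (2 * ‖y‖))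
  have hdist := norm_sub_le_of_eq_smul_sub_apply_self hB hη le_rfl (hs₀ i)
    (by simpa using hz) (by simpa using hz_le) (hx i) (hx_le i)
  rw [norm_sub_rev, zero_sub, abs_neg, abs_of_pos (hs₀ i)] at hdist
  linarith

theorem eq_sub_apply_self_of_tendsto {ι : Type*} {l : Filter ι} [l.NeBot] {a : ι → E} {x : ι → E}
    {a₀ x₀ : E} (ha : Tendsto a l (𝓝 a₀)) (hx : Tendsto x l (𝓝 x₀))
    (hx_eq : ∀ i, x i = a i - B (x i) (x i)) :
    x₀ = a₀ - B x₀ x₀ := by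
  have hrhs := ha.sub ((B.continuous₂.tendsto (x₀, x₀)).comp (hx.prodMk_nhds hx))
  exact tendsto_nhds_unique hx (hrhs.congr fun i => (hx_eq i).symm)

end QuadraticEquation

/-- solvability of the quadratic equation `x = y - B(x,x)` in a Banach space,
with uniqueness in the ball `‖x‖ ≤ 1/(2η)`, provided `‖y‖ ≤ 1/(4η)`. -/
theorem stmt6 {E : Type*} [NormedAddCommGroup E] [NormedSpace ℝ E] [CompleteSpace E]
    (B : E →L[ℝ] E →L[ℝ] E) (η : ℝ) (hη : 0 < η)
    (hB : ∀ x y : E, ‖B x y‖ ≤ η * ‖x‖ * ‖y‖)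
    (y : E) (hy : ‖y‖ ≤ 1 / (4 * η)) :
    ∃! x : E, x = y - B x x ∧ ‖x‖ ≤ 1 / (2 * η) := by
  set s : ℕ → ℝ := fun k => (1 / 2) ^ k
  have hs₀ (k : ℕ) : 0 < s k := by positivity
  have hs_lim : Tendsto s atTop (𝓝 0) :=
    tendsto_pow_atTop_nhds_zero_of_lt_one (by norm_num) (by norm_num)
  choose x hx_eq hx_le using fun k =>
    exists_eq_smul_sub_apply_self hB hη hy (hs₀ k) (pow_le_one₀ (by norm_num) (by norm_num))
  have hcauchy : CauchySeq x := by
    refine cauchySeq_of_le_geometric (1 / 2) ‖y‖ (by norm_num) fun k => ?_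
    calc dist (x k) (x (k + 1)) ≤ 2 * |s k - s (k + 1)| * ‖y‖ :=
          (dist_eq_norm _ _).trans_le <| norm_sub_le_of_eq_smul_sub_apply_self hB hη
            (hs₀ k).le (hs₀ (k + 1)) (hx_eq k) (hx_le k) (hx_eq (k + 1)) (hx_le (k + 1))
      _ = ‖y‖ * (1 / 2) ^ k := by
          rw [show s k - s (k + 1) = (1 / 2) ^ k / 2 by simp only [s]; ring,
            abs_of_pos (by positivity)]
          ring
  obtain ⟨L, hL⟩ := cauchySeq_tendsto_of_complete hcauchy
  have hL_eq : L = y - B L L := by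
    refine eq_sub_apply_self_of_tendsto ?_ hL hx_eq
    simpa using ((hs_lim.pow 2).const_sub 1).smul_const y
  have hL_le : ‖L‖ ≤ 1 / (2 * η) :=
    le_of_tendsto' hL.norm fun k => (hx_le k).trans (by gcongr; linarith [hs₀ k])
  refine ⟨L, ⟨hL_eq, hL_le⟩, fun z ⟨hz, hz_le⟩ => tendsto_nhds_unique ?_ hL⟩
  exact tendsto_of_eq_smul_sub_apply_self hB hη hs_lim hs₀ hx_eq hx_le hz hz_le
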